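/- A Kripke model is a countermodel to a hypersequent H iff it is a countermodel to the Burns–Zach formula translation I(H) at some point: for any Kripke model M, there is a branch w₁,...,wₙ countermodelling H iff there is a point w with v(I(H),w)=0. -/
import Mathlib


inductive Fm where
  | atom : ℕ → Fm
  | neg : Fm → Fm
  | and : Fm → Fm → Fm
  | or : Fm → Fm → Fm
  | box : Fm → Fm
deriving DecidableEq

/-- Classical Kripke satisfaction. -/
def Sat {W : Type} (R : W → W → Prop) (v : W → ℕ → Prop) : Fm → W → Prop
  | .atom n, x => v x n
  | .neg φ, x => ¬ Sat R v φ x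
  | .and φ ψ, x => Sat R v φ x ∧ Sat R v ψ x
  | .or φ ψ, x => Sat R v φ x ∨ Sat R v ψ x
  | .box φ, x => ∀ y, R x y → Sat R v φ y

/-- A sequent is a pair of finite sets of formulas. -/
abbrev HSeq := Finset Fm × Finset Fm
/-- A hypersequent is a finite list of sequents. -/
abbrev Hyp := List HSeq

/-- A point refutes a sequent: all antecedent formulas true, all succedent formulas false. -/
def Refutes {W : Type} (R : W → W → Prop) (v : W → ℕ → Prop) (S : HSeq) (w : W) : Prop :=
  (∀ φ ∈ S.1, Sat R v φ w) ∧ (∀ φ ∈ S.2, ¬ Sat R v φ w)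

/-- A branch of R-related points starting at `w` countermodels the hypersequent. -/
def Counter {W : Type} (R : W → W → Prop) (v : W → ℕ → Prop) : Hyp → W → Prop
  | [], _ => True
  | [S], w => Refutes R v S w
  | S :: S' :: rest, w => Refutes R v S w ∧ ∃ w', R w w' ∧ Counter R v (S' :: rest) w'

/-- Material implication φ→ψ := ¬φ∨ψ. -/
def Imp (φ ψ : Fm) : Fm := .or (.neg φ) ψ

/-- Conjunction of a finite set of formulas (empty conjunction is a tautology). -/
noncomputable def BigAnd (Γ : Finset Fm) : Fm :=
  Γ.toList.foldr .and (.or (.atom 0) (.neg (.atom 0)))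

/-- Disjunction of a finite set of formulas (empty disjunction is a contradiction). -/
noncomputable def BigOr (Δ : Finset Fm) : Fm :=
  Δ.toList.foldr .or (.and (.atom 0) (.neg (.atom 0)))

/-- The Burns–Zach formula translation of a hypersequent:
I(Γ⇒Δ) = ⋀Γ→⋁Δ and I(Γ⇒Δ//H) = (⋀Γ→⋁Δ) ∨ □I(H). -/
noncomputable def ITr : Hyp → Fm
  | [] => .and (.atom 0) (.neg (.atom 0))
  | [S] => Imp (BigAnd S.1) (BigOr S.2)
  | S :: S' :: rest => .or (Imp (BigAnd S.1) (BigOr S.2)) (.box (ITr (S' :: rest)))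

lemma sat_foldr_and {W : Type} (R : W → W → Prop) (v : W → ℕ → Prop) (l : List Fm) (b : Fm) (w : W) :
    Sat R v (l.foldr .and b) w ↔ (∀ φ ∈ l, Sat R v φ w) ∧ Sat R v b w := by
  induction l with
  | nil => simp
  | cons a l ih => simp [Sat, ih]; tauto

lemma sat_foldr_or {W : Type} (R : W → W → Prop) (v : W → ℕ → Prop) (l : List Fm) (b : Fm) (w : W) :
    Sat R v (l.foldr .or b) w ↔ (∃ φ ∈ l, Sat R v φ w) ∨ Sat R v b w := by
  induction l with
  | nil => simp
  | cons a l ih => simp only [List.foldr_cons, Sat, ih, List.mem_cons]; aesop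

lemma sat_bigAnd {W : Type} (R : W → W → Prop) (v : W → ℕ → Prop) (Γ : Finset Fm) (w : W) :
    Sat R v (BigAnd Γ) w ↔ ∀ φ ∈ Γ, Sat R v φ w := by
  unfold BigAnd
  rw [sat_foldr_and]
  simp [Sat]
  tauto

lemma sat_bigOr {W : Type} (R : W → W → Prop) (v : W → ℕ → Prop) (Δ : Finset Fm) (w : W) :
    Sat R v (BigOr Δ) w ↔ ∃ φ ∈ Δ, Sat R v φ w := by
  unfold BigOr
  rw [sat_foldr_or]
  simp [Sat]

lemma refutes_iff {W : Type} (R : W → W → Prop) (v : W → ℕ → Prop) (S : HSeq) (w : W) :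
    Refutes R v S w ↔ ¬ Sat R v (Imp (BigAnd S.1) (BigOr S.2)) w := by
  simp only [Refutes, Imp, Sat, not_or, not_not, sat_bigAnd, sat_bigOr, not_exists]
  tauto

lemma counter_iff_not_sat {W : Type} (R : W → W → Prop) (v : W → ℕ → Prop) :
    ∀ (rest : Hyp) (S : HSeq) (w : W),
      Counter R v (S :: rest) w ↔ ¬ Sat R v (ITr (S :: rest)) w := by
  intro rest
  induction rest with
  | nil => intro S w; simp [Counter, ITr, refutes_iff]
  | cons S' rest ih =>
      intro S w
      simp only [Counter, ITr, Sat, not_or, refutes_iff, ih]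
      constructor
      · rintro ⟨h1, w', hR, h2⟩
        exact ⟨h1, fun hall => h2 (hall w' hR)⟩
      · rintro ⟨h1, h2⟩
        refine ⟨h1, ?_⟩
        push_neg at h2
        obtain ⟨w', hR, h⟩ := h2
        exact ⟨w', hR, h⟩

/-- For any Kripke model, a (nonempty) hypersequent H has a
countermodelling branch iff the Burns–Zach translation I(H) is false at some
point. -/
theorem counter_iff_translation_false :
    ∀ (W : Type) (R : W → W → Prop) (v : W → ℕ → Prop) (H : Hyp), H ≠ [] →
      ((∃ w : W, Counter R v H w) ↔ (∃ w : W, ¬ Sat R v (ITr H) w)) := by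
  intro W R v H hne
  match H with
  | [] => exact absurd rfl hne
  | S :: rest =>
      exact exists_congr fun w => counter_iff_not_sat R v rest S w
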